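/- Let (C•, d) be a bounded acyclic complex of Hilbert spaces with closed densely defined differentials (exact at every degree, with Im(d) closed equal to Ker(d)). Then the complex is contractible: there exist bounded operators H : Cⁿ → Cⁿ⁻¹ such that Hd + dH = id on Dom(d). -/

import Mathlib

/-!
Restricted to `Dom(d) ∩ Ker(d)ᗮ`, a closed operator `d` with closed range is a bijection onto its
range whose inverse is closed, hence bounded by the closed graph theorem. Composing it with the
orthogonal projection onto `Im(d)` gives a bounded `H` with `d H = P_{Im(d)}` and `H d = id` on
`Dom(d) ∩ Ker(d)ᗮ`. For `x ∈ Dom(d)`, exactness turns `x - d H x ∈ Im(d)ᗮ` into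
`x - d H x ∈ Ker(d)ᗮ`, and `d (x - d H x) = d x`, so `H d x = x - d H x`.
-/

namespace LinearPMap

section Algebraic

variable {R E F : Type*} [Ring R] [AddCommGroup E] [Module R E] [AddCommGroup F] [Module R F]

def ker (f : E →ₗ.[R] F) : Submodule R E :=
  (LinearMap.ker f.toFun).map f.domain.subtype

variable {f : E →ₗ.[R] F}

theorem mem_ker {x : E} : x ∈ f.ker ↔ ∃ h : x ∈ f.domain, f ⟨x, h⟩ = 0 := by
  simp [ker]

theorem ker_domRestrict_eq_bot_of_disjoint {S : Submodule R E} (hS : Disjoint S f.ker) :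
    LinearMap.ker (f.domRestrict S).toFun = ⊥ := by
  refine (LinearMap.ker_eq_bot').2 fun x hx => ?_
  have hfx : f ⟨x, x.2.2⟩ = 0 := (domRestrict_apply rfl).symm.trans hx
  have : (x : E) = 0 := (Submodule.disjoint_def.1 hS) x x.2.1 (mem_ker.2 ⟨x.2.2, hfx⟩)
  exact Subtype.ext this

theorem exists_apply_inverse_apply (hf : LinearMap.ker f.toFun = ⊥) (y : f.inverse.domain) :
    ∃ x : f.domain, (x : E) = f.inverse y ∧ f x = y := by
  obtain ⟨x, hx⟩ : (y : F) ∈ LinearMap.range f.toFun := inverse_domain (f := f) ▸ y.2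
  exact ⟨x, (inverse_apply_eq hf hx).symm, hx⟩

end Algebraic

section Topological

variable {R E F : Type*} [CommRing R] [AddCommGroup E] [Module R E] [AddCommGroup F] [Module R F]
  [TopologicalSpace E] [TopologicalSpace F] {f : E →ₗ.[R] F}

theorem IsClosed.isClosed_ker (hf : f.IsClosed) : _root_.IsClosed (f.ker : Set E) := by
  have : (f.ker : Set E) = (fun x => (x, (0 : F))) ⁻¹' f.graph := by
    ext x
    simp [mem_ker, eq_comm]
  rw [this]
  exact _root_.IsClosed.preimage (continuous_id.prodMk continuous_const) hf

theorem IsClosed.domRestrict (hf : f.IsClosed) {S : Submodule R E}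
    (hS : _root_.IsClosed (S : Set E)) : (f.domRestrict S).IsClosed := by
  have : ((f.domRestrict S).graph : Set (E × F)) = Prod.fst ⁻¹' S ∩ f.graph := by
    ext ⟨x, y⟩
    simp only [mem_graph_iff, domRestrict_domain, Set.mem_inter_iff, Set.mem_preimage,
      SetLike.mem_coe]
    constructor
    · rintro ⟨z, rfl, rfl⟩
      exact ⟨z.2.1, ⟨z, z.2.2⟩, rfl, domRestrict_apply rfl⟩
    · rintro ⟨hxS, z, rfl, rfl⟩
      exact ⟨⟨z, hxS, z.2⟩, rfl, domRestrict_apply rfl⟩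
  rw [IsClosed, this]
  exact (hS.preimage continuous_fst).inter hf

end Topological

section Banach

theorem IsClosed.continuous_toFun {𝕜 E F : Type*} [NontriviallyNormedField 𝕜]
    [NormedAddCommGroup E] [NormedSpace 𝕜 E] [CompleteSpace E]
    [NormedAddCommGroup F] [NormedSpace 𝕜 F] [CompleteSpace F] {f : E →ₗ.[𝕜] F}
    (hf : f.IsClosed) (hdom : _root_.IsClosed (f.domain : Set E)) : Continuous f.toFun := by
  have : CompleteSpace f.domain := hdom.completeSpace_coe
  refine f.toFun.continuous_of_isClosed_graph ?_
  have : (f.toFun.graph : Set (f.domain × F)) = Prod.map Subtype.val id ⁻¹' f.graph := by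
    ext ⟨x, y⟩
    simp only [LinearMap.mem_graph_iff, Set.mem_preimage, Prod.map_fst, Prod.map_snd, id_eq,
      SetLike.mem_coe, mem_graph_iff]
    constructor
    · rintro rfl
      exact ⟨x, rfl, rfl⟩
    · rintro ⟨z, hz, rfl⟩
      exact congrArg f (Subtype.ext hz)
  rw [this]
  exact _root_.IsClosed.preimage (continuous_subtype_val.prodMap continuous_id) hf

end Banach

section Hilbert

variable {𝕜 E F : Type*} [RCLike 𝕜] [NormedAddCommGroup E] [InnerProductSpace 𝕜 E]
  [NormedAddCommGroup F] [InnerProductSpace 𝕜 F] {f : E →ₗ.[𝕜] F}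

theorem range_domRestrict_orthogonal_ker [f.ker.HasOrthogonalProjection] :
    LinearMap.range (f.domRestrict f.kerᗮ).toFun = LinearMap.range f.toFun := by
  refine le_antisymm ?_ ?_
  · rintro _ ⟨x, rfl⟩
    exact ⟨⟨x, x.2.2⟩, (domRestrict_apply rfl).symm⟩
  · rintro _ ⟨w, rfl⟩
    have hPw : f.ker.starProjection w ∈ f.ker := f.ker.starProjection_apply_mem w
    obtain ⟨hPw_dom, hfPw⟩ := mem_ker.1 hPw
    have hmem : (w : E) - f.ker.starProjection w ∈ (f.domRestrict f.kerᗮ).domain :=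
      ⟨f.ker.sub_starProjection_mem_orthogonal w, sub_mem w.2 hPw_dom⟩
    refine ⟨⟨_, hmem⟩, (domRestrict_apply (y := w - ⟨_, hPw_dom⟩) rfl).trans ?_⟩
    rw [map_sub, hfPw, sub_zero]
    rfl

variable [CompleteSpace E] [CompleteSpace F]

theorem IsClosed.exists_continuous_inverse_of_isClosed_range (hf : f.IsClosed)
    (hrange : _root_.IsClosed (LinearMap.range f.toFun : Set F)) :
    ∃ g : F →L[𝕜] E, (∀ y, ∃ hy : g y ∈ f.domain, y - f ⟨g y, hy⟩ ∈ (LinearMap.range f.toFun)ᗮ) ∧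
      ∀ u : f.domain, (u : E) ∈ f.kerᗮ → g (f u) = u := by
  have : CompleteSpace f.ker := hf.isClosed_ker.completeSpace_coe
  set f' := f.domRestrict f.kerᗮ
  have hinj : LinearMap.ker f'.toFun = ⊥ :=
    ker_domRestrict_eq_bot_of_disjoint (Submodule.orthogonal_disjoint f.ker).symm
  have hdom : f'.inverse.domain = LinearMap.range f.toFun :=
    inverse_domain.trans range_domRestrict_orthogonal_ker
  have hdom_closed : _root_.IsClosed (f'.inverse.domain : Set F) := hdom ▸ hrange
  have : CompleteSpace f'.inverse.domain := hdom_closed.completeSpace_coe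
  have hclosed : f'.inverse.IsClosed :=
    (inverse_closed_iff hinj).2 (hf.domRestrict (Submodule.isClosed_orthogonal _))
  have hcont : Continuous f'.inverse.toFun := hclosed.continuous_toFun hdom_closed
  let g : F →L[𝕜] E :=
    (⟨f'.inverse.toFun, hcont⟩ : f'.inverse.domain →L[𝕜] E) ∘L
      f'.inverse.domain.orthogonalProjectionOnto
  refine ⟨g, fun y => ?_, fun u hu => ?_⟩
  · obtain ⟨x, hxg, hfx⟩ := exists_apply_inverse_apply hinj
      (f'.inverse.domain.orthogonalProjectionOnto y)
    have hgy : g y = x := hxg.symm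
    refine ⟨hgy ▸ x.2.2, ?_⟩
    have hfgy : f ⟨g y, hgy ▸ x.2.2⟩ = f'.inverse.domain.starProjection y := calc
      _ = f ⟨x, x.2.2⟩ := congrArg f (Subtype.ext hgy)
      _ = f' x := (domRestrict_apply rfl).symm
      _ = _ := hfx
    rw [hfgy, ← hdom]
    exact f'.inverse.domain.sub_starProjection_mem_orthogonal y
  · have hfu : f u ∈ f'.inverse.domain := hdom ▸ ⟨u, rfl⟩
    have hproj := f'.inverse.domain.orthogonalProjectionOnto_mem_subspace_eq_self ⟨_, hfu⟩
    change f'.inverse (f'.inverse.domain.orthogonalProjectionOnto (f u)) = u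
    rw [hproj]
    exact inverse_apply_eq hinj (x := ⟨u, hu, u.2⟩) (domRestrict_apply rfl)

end Hilbert

end LinearPMap

theorem acyclic_hilbert_complex_contractible_general
    (C : ℤ → Type*)
    [∀ n, NormedAddCommGroup (C n)] [∀ n, InnerProductSpace ℝ (C n)]
    [∀ n, CompleteSpace (C n)]
    (d : ∀ n : ℤ, C n →ₗ.[ℝ] C (n + 1))
    (hclosed : ∀ n, (d n).IsClosed)
    -- exactness with closed ranges: `Im(dₙ) = Ker(dₙ₊₁)` (this includes `d² = 0`)
    (hexact : ∀ n, LinearMap.range (d n).toFun =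
      (LinearMap.ker (d (n + 1)).toFun).map (d (n + 1)).domain.subtype) :
    ∃ H : ∀ n : ℤ, C (n + 1) →L[ℝ] C n,
      ∀ (n : ℤ) (x : C (n + 1)) (hx : x ∈ (d (n + 1)).domain),
        ∃ hHx : H n x ∈ (d n).domain,
          (d n) ⟨H n x, hHx⟩ + H (n + 1) ((d (n + 1)) ⟨x, hx⟩) = x := by
  have hrange_eq_ker : ∀ n, LinearMap.range (d n).toFun = (d (n + 1)).ker := hexact
  choose H hH_proj hH_inv using fun n =>
    (hclosed n).exists_continuous_inverse_of_isClosed_range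
      (hrange_eq_ker n ▸ (hclosed (n + 1)).isClosed_ker)
  refine ⟨H, fun n x hx => ?_⟩
  obtain ⟨hHx, horth⟩ := hH_proj n x
  refine ⟨hHx, ?_⟩
  set p := d n ⟨H n x, hHx⟩
  have hp : p ∈ (d (n + 1)).ker := hrange_eq_ker n ▸ LinearMap.mem_range_self _ _
  obtain ⟨hp_dom, hdp⟩ := LinearPMap.mem_ker.1 hp
  have hd_sub : d (n + 1) ⟨x - p, sub_mem hx hp_dom⟩ = d (n + 1) ⟨x, hx⟩ := by
    rw [show (⟨x - p, _⟩ : (d (n + 1)).domain) = ⟨x, hx⟩ - ⟨p, hp_dom⟩ from rfl,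
      LinearPMap.map_sub, hdp, sub_zero]
  rw [← hd_sub, hH_inv (n + 1) ⟨x - p, _⟩ (hrange_eq_ker n ▸ horth)]
  exact add_sub_cancel p x

/-- **An acyclic Hilbert complex is contractible.**
Let `(C•, d)` be a bounded complex of Hilbert spaces with closed densely
defined differentials `dₙ : Cⁿ → Cⁿ⁺¹` which is exact at every degree with
`Im(dₙ)` closed and equal to `Ker(dₙ₊₁)`.  Then there exist bounded operators
`Hₙ : Cⁿ⁺¹ → Cⁿ` with `H d + d H = id` on `Dom(d)` at every degree. -/
theorem acyclic_hilbert_complex_contractible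
    (C : ℤ → Type*)
    [∀ n, NormedAddCommGroup (C n)] [∀ n, InnerProductSpace ℝ (C n)]
    [∀ n, CompleteSpace (C n)]
    (d : ∀ n : ℤ, C n →ₗ.[ℝ] C (n + 1))
    (hbounded : ∃ N : ℕ, ∀ n : ℤ, (N : ℤ) < |n| → Subsingleton (C n))
    (hclosed : ∀ n, (d n).IsClosed)
    (hdense : ∀ n, Dense ((d n).domain : Set (C n)))
    -- exactness with closed ranges: `Im(dₙ) = Ker(dₙ₊₁)` (this includes `d² = 0`)
    (hexact : ∀ n, LinearMap.range (d n).toFun =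
      (LinearMap.ker (d (n + 1)).toFun).map (d (n + 1)).domain.subtype) :
    ∃ H : ∀ n : ℤ, C (n + 1) →L[ℝ] C n,
      ∀ (n : ℤ) (x : C (n + 1)) (hx : x ∈ (d (n + 1)).domain),
        ∃ hHx : H n x ∈ (d n).domain,
          (d n) ⟨H n x, hHx⟩ + H (n + 1) ((d (n + 1)) ⟨x, hx⟩) = x :=
  acyclic_hilbert_complex_contractible_general C d hclosed hexact
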